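/- arXiv:2407.04234 — 8 statements merged into one kernel-verified Lean document; each statement's English description precedes it below -/
import Mathlib

section
/- Let T : ℓ₁ → ℓ₁ be the map T(x₁,x₂,…) = (1, x₁, x₂, …), and define h : ℓ₁ → ℝ by h(x) = Σ_{k≥1} (|x_k − 1| − 1). Then h is well-defined (the series converges) and h(Tx) = h(x) − 1 for all x ∈ ℓ₁. In particular T has no fixed point in ℓ₁. -/
theorem lp_one_summable_abs (x : lp (fun _ : ℕ => ℝ) 1) : Summable fun k => |x k| := by
  simpa using (lp.memℓp x).summable (by norm_num)

theorem Summable.abs_sub_sub_abs {ι : Type*} {f : ι → ℝ} (hf : Summable fun i => |f i|) (c : ℝ) :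
    Summable fun i => |f i - c| - |c| :=
  hf.of_norm_bounded fun i => by simpa using abs_abs_sub_abs_le_abs_sub (f i - c) (-c)

theorem tsum_abs_sub_one_sub_one_eq_tail_sub_one {y : ℕ → ℝ}
    (hy : Summable fun k => |y k - 1| - 1) (h0 : y 0 = 1) :
    ∑' k, (|y k - 1| - 1) = ∑' k, (|y (k + 1) - 1| - 1) - 1 := by
  rw [hy.tsum_eq_zero_add, h0, sub_self, abs_zero]
  ring

/-- For the shift `T(x₁,x₂,…) = (1,x₁,x₂,…)` on `ℓ₁` and
`h x = Σ_k (|x_k − 1| − 1)`: the series converges, `h(Tx) = h(x) − 1`,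
and `T` has no fixed point. -/
theorem stmt_7 (T : lp (fun _ : ℕ => ℝ) 1 → lp (fun _ : ℕ => ℝ) 1)
    (hT : ∀ x : lp (fun _ : ℕ => ℝ) 1,
      (T x) 0 = 1 ∧ ∀ n : ℕ, (T x) (n + 1) = x n)
    (h : lp (fun _ : ℕ => ℝ) 1 → ℝ)
    (hh : ∀ x, h x = ∑' k : ℕ, (|x k - 1| - 1)) :
    (∀ x : lp (fun _ : ℕ => ℝ) 1, Summable (fun k : ℕ => |x k - 1| - 1)) ∧
    (∀ x : lp (fun _ : ℕ => ℝ) 1, h (T x) = h x - 1) ∧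
    (∀ x : lp (fun _ : ℕ => ℝ) 1, T x ≠ x) := by
  have summable (x : lp (fun _ : ℕ => ℝ) 1) : Summable fun k => |x k - 1| - 1 := by
    simpa using (lp_one_summable_abs x).abs_sub_sub_abs 1
  have shift (x : lp (fun _ : ℕ => ℝ) 1) : h (T x) = h x - 1 := by
    rw [hh, hh, tsum_abs_sub_one_sub_one_eq_tail_sub_one (summable (T x)) (hT x).1]
    simp only [(hT x).2]
  refine ⟨summable, shift, fun x hfix => ?_⟩
  have := shift x
  rw [hfix] at this
  linarith
end

section
/- Let T : ℓ₁ → ℓ₁ be T(x₁,x₂,…) = (1,x₁,x₂,…). For each integer N ≥ 1 define h^{(N)}(x) = Σ_{j>N} (−x_j) + Σ_{j=1}^N (|x_j − 1| − 1). Then for all x ∈ ℓ₁, h^{(N)}(x) − h^{(N)}(Tx) = |x_N − 1| + x_N ≥ 1; in particular each h^{(N)} is subinvariant for T. -/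
/-!
Shifting by `T` moves `x_N` out of the finite sum of `h^{(N)}` into its tail, where it
contributes `-x_N`, and puts the coordinate `1` in front, contributing `|1 - 1| - 1 = -1`;
everything else cancels, leaving `|x_N - 1| + x_N ≥ (1 - x_N) + x_N = 1`.
-/

open scoped ENNReal

theorem tsum_nat_add_eq_add_tsum_nat_add_succ {G : Type*} [AddCommGroup G] [TopologicalSpace G]
    [IsTopologicalAddGroup G] [T2Space G] {f : ℕ → G} (hf : Summable f) (N : ℕ) :
    ∑' j, f (j + N) = f N + ∑' j, f (j + N + 1) := by
  simpa only [zero_add, Nat.add_right_comm] using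
    ((summable_nat_add_iff N).2 hf).tsum_eq_zero_add

theorem le_abs_sub_add_self {α : Type*} [AddCommGroup α] [LinearOrder α]
    [IsOrderedAddMonoid α] (a b : α) : b ≤ |a - b| + a := by
  have : b - a ≤ |a - b| := abs_sub_comm a b ▸ le_abs_self (b - a)
  exact sub_le_iff_le_add.1 this

/-- Coordinates are indexed from `0`: the paper's `x_j` is `x (j - 1)`, and its `N` is `N + 1`. -/
theorem stmt_8 (T : lp (fun _ : ℕ => ℝ) 1 → lp (fun _ : ℕ => ℝ) 1)
    (hT : ∀ x : lp (fun _ : ℕ => ℝ) 1,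
      (T x) 0 = 1 ∧ ∀ n : ℕ, (T x) (n + 1) = x n)
    (N : ℕ)
    (h : lp (fun _ : ℕ => ℝ) 1 → ℝ)
    (hh : ∀ x, h x = (∑' j : ℕ, (- x (j + N + 1)))
        + ∑ j ∈ Finset.range (N + 1), (|x j - 1| - 1)) :
    ∀ x : lp (fun _ : ℕ => ℝ) 1,
      h x - h (T x) = |x N - 1| + x N ∧ 1 ≤ |x N - 1| + x N ∧ h (T x) ≤ h x := by
  intro x
  obtain ⟨hT0, hTs⟩ := hT x
  have hdiff : h x - h (T x) = |x N - 1| + x N := by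
    have htail := tsum_nat_add_eq_add_tsum_nat_add_succ (lp.memℓp x).summable_of_one.neg N
    rw [hh, hh, Finset.sum_range_succ, Finset.sum_range_succ', hT0]
    simp only [hTs]
    rw [htail]
    simp only [sub_self, abs_zero]
    ring
  have hge : 1 ≤ |x N - 1| + x N := le_abs_sub_add_self (x N) 1
  exact ⟨hdiff, hge, by linarith⟩
end

section
/- Let T : ℓ₂ → ℓ₂ be T(x₁,x₂,…) = (1,x₁,x₂,…) and let z ∈ ℓ₂ with ‖z‖₂ ≤ 1 define the linear functional h(x) = ⟨x, z⟩. If z ≠ 0 then h is not subinvariant for T; i.e., there exists x ∈ ℓ₂ with ⟨x − Tx, z⟩ < 0. -/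
/-!
`T` is affine, `T (c • z) = T 0 + c • w` with `w = T z - T 0 = (0, z₀, z₁, …)` the right shift
of `z`. The shift is an isometry that fixes no nonzero vector, so `w ≠ z` and `‖w‖ = ‖z‖`, whence
`⟪z - w, z⟫ = ‖z - w‖² / 2 > 0`. Since `⟪c • z - T (c • z), z⟫ = c ⟪z - w, z⟫ - ⟪T 0, z⟫` is then a
nonconstant affine function of `c`, it takes negative values.
-/

open scoped ENNReal RealInnerProductSpace

theorem lp.norm_eq_of_shift {E : Type*} [NormedAddCommGroup E] {p : ℝ≥0∞} [Fact (1 ≤ p)]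
    (hp : 0 < p.toReal) {w z : lp (fun _ : ℕ => E) p} (hw0 : w 0 = 0)
    (hw : ∀ n, w (n + 1) = z n) : ‖w‖ = ‖z‖ := by
  have hsum : ∑' i, ‖w i‖ ^ p.toReal = ∑' i, ‖z i‖ ^ p.toReal := by
    rw [((lp.memℓp w).summable hp).tsum_eq_zero_add, hw0]
    simp [hw, Real.zero_rpow hp.ne']
  rw [← lp.norm_rpow_eq_tsum hp, ← lp.norm_rpow_eq_tsum hp] at hsum
  exact (Real.rpow_left_injOn hp.ne').eq_iff (norm_nonneg _) (norm_nonneg _) |>.mp hsum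

theorem eq_zero_of_apply_zero_of_apply_succ {α : Type*} [Zero α] {f : ℕ → α} (h0 : f 0 = 0)
    (hf : ∀ n, f (n + 1) = f n) : f = 0 := by
  funext n
  induction n with
  | zero => exact h0
  | succ n ih => rw [hf, ih]; rfl

theorem real_inner_sub_pos_of_norm_eq {F : Type*} [NormedAddCommGroup F]
    [InnerProductSpace ℝ F] {x y : F} (hxy : x ≠ y) (hn : ‖y‖ = ‖x‖) : 0 < ⟪x - y, x⟫ := by
  -- `‖x - y‖² = 2 ⟪x - y, x⟫` when `‖x‖ = ‖y‖`
  have h := norm_sub_sq_real x y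
  have hpos : 0 < ‖x - y‖ := norm_pos_iff.mpr (sub_ne_zero.mpr hxy)
  rw [inner_sub_left, real_inner_self_eq_norm_sq, real_inner_comm]
  rw [hn] at h
  nlinarith [pow_pos hpos 2]

section ConsShift

variable {E : Type*} [NormedAddCommGroup E] {p : ℝ≥0∞}
  {T : lp (fun _ : ℕ => E) p → lp (fun _ : ℕ => E) p} {a : E}

theorem sub_apply_zero_of_cons (hT : ∀ x, T x 0 = a ∧ ∀ n, T x (n + 1) = x n)
    (x y : lp (fun _ : ℕ => E) p) : (T x - T y) 0 = 0 := by
  simp [(hT x).1, (hT y).1]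

theorem sub_apply_succ_of_cons (hT : ∀ x, T x 0 = a ∧ ∀ n, T x (n + 1) = x n)
    (x y : lp (fun _ : ℕ => E) p) (n : ℕ) : (T x - T y) (n + 1) = (x - y) n := by
  simp [(hT x).2, (hT y).2]

theorem apply_smul_of_cons [Fact (1 ≤ p)] {𝕜 : Type*} [NormedRing 𝕜] [Module 𝕜 E]
    [IsBoundedSMul 𝕜 E]
    (hT : ∀ x, T x 0 = a ∧ ∀ n, T x (n + 1) = x n) (c : 𝕜) (x : lp (fun _ : ℕ => E) p) :
    T (c • x) = T 0 + c • (T x - T 0) := by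
  ext n
  rw [lp.coeFn_add, lp.coeFn_smul, lp.coeFn_sub, Pi.add_apply, Pi.smul_apply, Pi.sub_apply]
  cases n with
  | zero => simp [(hT _).1]
  | succ n => simp [(hT _).2]

end ConsShift

theorem stmt_9_general (T : lp (fun _ : ℕ => ℝ) 2 → lp (fun _ : ℕ => ℝ) 2)
    (hT : ∀ x : lp (fun _ : ℕ => ℝ) 2,
      (T x) 0 = 1 ∧ ∀ n : ℕ, (T x) (n + 1) = x n)
    (z : lp (fun _ : ℕ => ℝ) 2) (hz0 : z ≠ 0) :
    ∃ x : lp (fun _ : ℕ => ℝ) 2, ⟪x - T x, z⟫ < 0 := by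
  set w := T z - T 0
  have hw0 : w 0 = 0 := sub_apply_zero_of_cons hT z 0
  have hw (n : ℕ) : w (n + 1) = z n := by
    rw [sub_apply_succ_of_cons hT, sub_zero]
  have hwz : z ≠ w := by
    intro hzw
    rw [← hzw] at hw0 hw
    exact hz0 (lp.ext (eq_zero_of_apply_zero_of_apply_succ hw0 hw))
  have hδ : 0 < ⟪z - w, z⟫ :=
    real_inner_sub_pos_of_norm_eq hwz (lp.norm_eq_of_shift (by norm_num) hw0 hw)
  refine ⟨((⟪T 0, z⟫ - 1) / ⟪z - w, z⟫) • z, ?_⟩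
  rw [apply_smul_of_cons hT]
  have hinner : ∀ c : ℝ, ⟪c • z - (T 0 + c • w), z⟫ = c * ⟪z - w, z⟫ - ⟪T 0, z⟫ := by
    intro c
    simp only [inner_sub_left, inner_add_left, real_inner_smul_left]
    ring
  rw [hinner, div_mul_cancel₀ _ hδ.ne']
  linarith

/-- For the shift `T(x₁,x₂,…) = (1,x₁,x₂,…)` on `ℓ₂` and `z ∈ ℓ₂` with `‖z‖ ≤ 1`, `z ≠ 0`,
the linear functional `h x = ⟨x,z⟩` is not subinvariant for `T`: there is `x` with
`⟨x − Tx, z⟩ < 0`. -/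
theorem stmt_9 (T : lp (fun _ : ℕ => ℝ) 2 → lp (fun _ : ℕ => ℝ) 2)
    (hT : ∀ x : lp (fun _ : ℕ => ℝ) 2,
      (T x) 0 = 1 ∧ ∀ n : ℕ, (T x) (n + 1) = x n)
    (z : lp (fun _ : ℕ => ℝ) 2) (hz : ‖z‖ ≤ 1) (hz0 : z ≠ 0) :
    ∃ x : lp (fun _ : ℕ => ℝ) 2, ⟪x - T x, z⟫ < 0 :=
  stmt_9_general T hT z hz0
end

section
/- Let E be a real normed space, X ⊆ E, and suppose u ∈ E with ‖u‖ = 1 satisfies tu ∈ X for all t ≥ 0. Then for every x ∈ E, the limit lim_{t→∞} (‖x − tu‖ − t) exists and equals sup { −f(x) : f ∈ E*, ‖f‖ = 1, f(u) = 1 }. Moreover the resulting function h satisfies h(su) = −s for all s ≥ 0. -/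
/-!
For `‖u‖ = 1` the function `t ↦ ‖x - t • u‖ - t` is antitone and bounded below by `-‖x‖`, so it
converges to its infimum `busemann u x`. This limit is sublinear in `x` and dominated by the norm.
Every `f` with `‖f‖ = 1` and `f u = 1` satisfies `-f ≤ busemann u`, and Hahn–Banach applied to the
sublinear functional `busemann u` on the line through `x` produces such an `f` with
`-f x = busemann u x`, so the supremum is attained.
-/

open Filter

section Sublinear

variable {E : Type*} [AddCommGroup E] [Module ℝ E] {N : E → ℝ}

theorem exists_linearMap_le_eq_of_sublinear
    (N_hom : ∀ c : ℝ, 0 < c → ∀ x, N (c • x) = c * N x) (N_add : ∀ x y, N (x + y) ≤ N x + N y)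
    (x : E) : ∃ g : E →ₗ[ℝ] ℝ, (∀ y, g y ≤ N y) ∧ g x = N x := by
  have N_zero : N 0 = 0 := by
    have := N_hom 2 two_pos 0
    rw [smul_zero] at this
    linarith
  have N_neg : -N x ≤ N (-x) := by
    have := N_add x (-x)
    rw [add_neg_cancel, N_zero] at this
    linarith
  let p : E →ₗ.[ℝ] ℝ := LinearPMap.mkSpanSingleton' x (N x) fun c hc => by
    rcases smul_eq_zero.1 hc with rfl | rfl
    · exact zero_smul _ _
    · rw [N_zero, smul_zero]
  have hp : ∀ z : p.domain, p z ≤ N z := by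
    rintro ⟨z, hz⟩
    obtain ⟨c, rfl⟩ := Submodule.mem_span_singleton.1 hz
    rw [LinearPMap.mkSpanSingleton'_apply, RingHom.id_apply, smul_eq_mul]
    change c * N x ≤ N (c • x)
    rcases lt_trichotomy c 0 with hc | rfl | hc
    · rw [← neg_smul_neg, N_hom _ (neg_pos.2 hc)]
      nlinarith
    · rw [zero_smul, zero_mul, N_zero]
    · rw [N_hom c hc]
  obtain ⟨g, hgp, hgN⟩ := exists_extension_of_le_sublinear p N N_hom N_add hp
  exact ⟨g, hgN, (hgp ⟨x, Submodule.mem_span_singleton_self x⟩).trans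
    (LinearPMap.mkSpanSingleton'_apply_self ..)⟩

end Sublinear

section Busemann

variable {E : Type*} [NormedAddCommGroup E] [NormedSpace ℝ E] {u : E}

noncomputable def busemann (u x : E) : ℝ := ⨅ t : ℝ, (‖x - t • u‖ - t)

theorem antitone_norm_sub_smul_sub (hu : ‖u‖ = 1) (x : E) :
    Antitone fun t : ℝ => ‖x - t • u‖ - t := by
  intro t s hts
  calc ‖x - s • u‖ - s = ‖(x - t • u) - (s - t) • u‖ - s := by
        rw [sub_smul, sub_sub_sub_cancel_right]
    _ ≤ ‖x - t • u‖ + ‖(s - t) • u‖ - s := by gcongr; exact norm_sub_le _ _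
    _ = ‖x - t • u‖ - t := by
        rw [norm_smul, hu, mul_one, Real.norm_of_nonneg (sub_nonneg.2 hts)]
        ring

theorem neg_norm_le_norm_sub_smul_sub (hu : ‖u‖ = 1) (x : E) (t : ℝ) :
    -‖x‖ ≤ ‖x - t • u‖ - t := by
  have h1 : t ≤ ‖t • u‖ := by
    rw [norm_smul, hu, mul_one]
    exact Real.le_norm_self t
  have h2 := norm_le_insert' (t • u) x
  rw [norm_sub_rev] at h2
  linarith

theorem bddBelow_range_norm_sub_smul_sub (hu : ‖u‖ = 1) (x : E) :
    BddBelow (Set.range fun t : ℝ => ‖x - t • u‖ - t) :=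
  ⟨-‖x‖, by rintro _ ⟨t, rfl⟩; exact neg_norm_le_norm_sub_smul_sub hu x t⟩

theorem busemann_le (hu : ‖u‖ = 1) (x : E) (t : ℝ) : busemann u x ≤ ‖x - t • u‖ - t :=
  ciInf_le (bddBelow_range_norm_sub_smul_sub hu x) t

theorem tendsto_busemann (hu : ‖u‖ = 1) (x : E) :
    Tendsto (fun t : ℝ => ‖x - t • u‖ - t) atTop (nhds (busemann u x)) :=
  tendsto_atTop_ciInf (antitone_norm_sub_smul_sub hu x) (bddBelow_range_norm_sub_smul_sub hu x)

theorem busemann_smul_self (hu : ‖u‖ = 1) (s : ℝ) : busemann u (s • u) = -s := by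
  refine tendsto_nhds_unique (tendsto_busemann hu (s • u)) (tendsto_const_nhds.congr' ?_)
  filter_upwards [eventually_ge_atTop s] with t hst
  rw [← sub_smul, norm_smul, hu, mul_one, Real.norm_of_nonpos (by linarith)]
  ring

theorem busemann_le_norm (hu : ‖u‖ = 1) (x : E) : busemann u x ≤ ‖x‖ := by
  simpa using busemann_le hu x 0

theorem busemann_smul_of_pos (hu : ‖u‖ = 1) {c : ℝ} (hc : 0 < c) (x : E) :
    busemann u (c • x) = c * busemann u x := by
  refine tendsto_nhds_unique (tendsto_busemann hu (c • x)) ?_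
  refine (((tendsto_busemann hu x).comp (tendsto_id.atTop_div_const hc)).const_mul c).congr
    fun t => ?_
  simp only [Function.comp_apply, id]
  rw [mul_sub, mul_div_cancel₀ _ hc.ne', ← norm_smul_of_nonneg hc.le, smul_sub, smul_smul,
    mul_div_cancel₀ _ hc.ne']

theorem busemann_add_le (hu : ‖u‖ = 1) (x y : E) :
    busemann u (x + y) ≤ busemann u x + busemann u y := by
  refine ge_of_tendsto ((tendsto_busemann hu x).add (tendsto_busemann hu y))
    (Eventually.of_forall fun t => ?_)
  calc busemann u (x + y) ≤ ‖(x + y) - (2 * t) • u‖ - 2 * t := busemann_le hu _ _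
    _ = ‖(x - t • u) + (y - t • u)‖ - 2 * t := by rw [two_mul, add_smul, add_sub_add_comm]
    _ ≤ (‖x - t • u‖ - t) + (‖y - t • u‖ - t) := by linarith [norm_add_le (x - t • u) (y - t • u)]

theorem neg_apply_le_busemann {f : E →L[ℝ] ℝ} (hf : ‖f‖ ≤ 1) (hfu : f u = 1) (x : E) :
    -(f x) ≤ busemann u x :=
  le_ciInf fun t => by
    have := neg_le_of_abs_le (by simpa using f.le_of_opNorm_le hf (x - t • u))
    rw [hfu] at this
    linarith

theorem exists_dual_neg_apply_eq_busemann (hu : ‖u‖ = 1) (x : E) :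
    ∃ f : E →L[ℝ] ℝ, ‖f‖ = 1 ∧ f u = 1 ∧ -(f x) = busemann u x := by
  obtain ⟨g, hgN, hgx⟩ := exists_linearMap_le_eq_of_sublinear
    (fun c hc y => busemann_smul_of_pos hu hc y) (busemann_add_le hu) x
  have hg_norm : ∀ y, |g y| ≤ ‖y‖ := fun y => abs_le.2
    ⟨by linarith [(hgN (-y)).trans (busemann_le_norm hu (-y)), g.map_neg y, norm_neg y],
      (hgN y).trans (busemann_le_norm hu y)⟩
  have hgu : g u = -1 := by
    have h1 := (hgN ((1 : ℝ) • u)).trans_eq (busemann_smul_self hu 1)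
    have h2 := (hgN ((-1 : ℝ) • u)).trans_eq (busemann_smul_self hu (-1))
    simp only [one_smul, neg_one_smul, map_neg, neg_neg] at h1 h2
    linarith
  let f := (-g).mkContinuous 1 fun y => by simpa using hg_norm y
  have hfu : f u = 1 := by simp [f, hgu]
  refine ⟨f, le_antisymm (LinearMap.mkContinuous_norm_le _ zero_le_one _) ?_, hfu,
    by simp [f, hgx]⟩
  simpa [hfu, hu] using f.le_opNorm u

theorem isGreatest_busemann (hu : ‖u‖ = 1) (x : E) :
    IsGreatest {r : ℝ | ∃ f : E →L[ℝ] ℝ, ‖f‖ = 1 ∧ f u = 1 ∧ r = -(f x)} (busemann u x) := by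
  refine ⟨?_, ?_⟩
  · obtain ⟨f, hf, hfu, hfx⟩ := exists_dual_neg_apply_eq_busemann hu x
    exact ⟨f, hf, hfu, hfx.symm⟩
  · rintro _ ⟨f, hf, hfu, rfl⟩
    exact neg_apply_le_busemann hf.le hfu x

end Busemann

theorem stmt_11_general {E : Type*} [NormedAddCommGroup E] [NormedSpace ℝ E]
    (u : E) (hu : ‖u‖ = 1) :
    ∃ h : E → ℝ,
      (∀ x : E, Tendsto (fun t : ℝ => ‖x - t • u‖ - t) atTop (nhds (h x))) ∧
      (∀ x : E, h x = sSup {r : ℝ | ∃ f : E →L[ℝ] ℝ, ‖f‖ = 1 ∧ f u = 1 ∧ r = -(f x)}) ∧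
      (∀ s : ℝ, 0 ≤ s → h (s • u) = -s) :=
  ⟨busemann u, tendsto_busemann hu, fun x => (isGreatest_busemann hu x).csSup_eq.symm,
    fun s _ => busemann_smul_self hu s⟩

/-- If `u ∈ S_E` and the ray `{tu : t ≥ 0}` lies in `X ⊆ E`, then for every `x ∈ E` the
limit `lim_{t→∞} (‖x − tu‖ − t)` exists and equals
`sup { −f(x) : f ∈ E*, ‖f‖ = 1, f(u) = 1 }`; the resulting metric functional `h`
satisfies `h(su) = −s` for all `s ≥ 0`. -/
theorem stmt_11 {E : Type*} [NormedAddCommGroup E] [NormedSpace ℝ E]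
    (X : Set E) (u : E) (hu : ‖u‖ = 1) (hray : ∀ t : ℝ, 0 ≤ t → t • u ∈ X) :
    ∃ h : E → ℝ,
      (∀ x : E, Tendsto (fun t : ℝ => ‖x - t • u‖ - t) atTop (nhds (h x))) ∧
      (∀ x : E, h x = sSup {r : ℝ | ∃ f : E →L[ℝ] ℝ, ‖f‖ = 1 ∧ f u = 1 ∧ r = -(f x)}) ∧
      (∀ s : ℝ, 0 ≤ s → h (s • u) = -s) :=
  stmt_11_general u hu
end

section
/- Let S be a nonempty set and E = B(S) the Banach space of bounded real functions on S with the sup norm. For every metric functional h ∈ E^◇ (a pointwise limit of a net of functionals x ↦ ‖x − a_α‖ − ‖a_α‖), there exists x ∈ E with h(x) ≠ 0; in fact h(u) = 1 for u ≡ −1 or for u ≡ 1. Hence B(S) has the zero-free property. -/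
open scoped ENNReal

/-!
Every `a ∈ B(S)` nearly attains its norm either from above or from below. In the first case
`‖-1 - a‖ = ‖a‖ + 1`, in the second `‖1 - a‖ = ‖a‖ + 1`, so each functional
`x ↦ ‖x - a‖ - ‖a‖` takes the value `1` at `-1` or at `1`. Both conditions are closed in the
topology of pointwise convergence, hence pass to every metric functional.
-/

namespace lp

variable {S : Type*}

noncomputable def const (S : Type*) (c : ℝ) : lp (fun _ : S => ℝ) ∞ :=
  ⟨fun _ => c, memℓp_infty ⟨‖c‖, by rintro _ ⟨_, rfl⟩; rfl⟩⟩

lemma eq_const_of_forall_apply_eq {u : lp (fun _ : S => ℝ) ∞} {c : ℝ} (hu : ∀ s, u s = c) :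
    u = const S c :=
  Subtype.ext (funext hu)

lemma const_neg (c : ℝ) : const S (-c) = -const S c := rfl

lemma norm_add_const_of_forall_exists_lt {a : lp (fun _ : S => ℝ) ∞} {c : ℝ} (hc : 0 ≤ c)
    (ha : ∀ ε > 0, ∃ s, ‖a‖ - ε < a s) : ‖a + const S c‖ = ‖a‖ + c := by
  refine le_antisymm (norm_le_of_forall_le (by positivity) fun s => ?_) ?_
  · calc ‖(a + const S c) s‖ = |a s + c| := rfl
      _ ≤ |a s| + |c| := abs_add_le _ _
      _ ≤ ‖a‖ + c := add_le_add (norm_apply_le_norm ENNReal.top_ne_zero a s) (abs_of_nonneg hc).le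
  · refine le_of_forall_pos_le_add fun ε hε => ?_
    obtain ⟨s, hs⟩ := ha ε hε
    calc ‖a‖ + c ≤ a s + c + ε := by linarith
      _ ≤ |a s + c| + ε := by gcongr; exact le_abs_self _
      _ ≤ ‖a + const S c‖ + ε := by
        gcongr; exact norm_apply_le_norm ENNReal.top_ne_zero (a + const S c) s

lemma forall_exists_lt_apply_or_neg_apply [Nonempty S] (a : lp (fun _ : S => ℝ) ∞) :
    (∀ ε > 0, ∃ s, ‖a‖ - ε < a s) ∨ (∀ ε > 0, ∃ s, ‖a‖ - ε < -a s) := by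
  refine or_iff_not_imp_left.2 fun h => ?_
  push Not at h
  obtain ⟨ε₀, hε₀, ha_le⟩ := h
  intro ε hε
  have hlt : ‖a‖ - min ε ε₀ < ⨆ s, ‖a s‖ := by
    rw [← norm_eq_ciSup]; linarith [lt_min hε hε₀]
  obtain ⟨s, hs⟩ := exists_lt_of_lt_ciSup hlt
  refine ⟨s, ?_⟩
  rcases abs_choice (a s) with habs | habs <;> rw [Real.norm_eq_abs, habs] at hs
  · linarith [ha_le s, min_le_right ε ε₀]
  · linarith [min_le_left ε ε₀]

lemma norm_const_neg_one_sub_or_norm_const_one_sub [Nonempty S] (a : lp (fun _ : S => ℝ) ∞) :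
    ‖const S (-1) - a‖ - ‖a‖ = 1 ∨ ‖const S 1 - a‖ - ‖a‖ = 1 := by
  rcases forall_exists_lt_apply_or_neg_apply a with ha | ha
  · left
    rw [const_neg, ← neg_add', add_comm, norm_neg,
      norm_add_const_of_forall_exists_lt zero_le_one ha, add_sub_cancel_left]
  · right
    have hna : ∀ ε > 0, ∃ s, ‖-a‖ - ε < (-a) s := by
      simpa only [norm_neg, lp.coeFn_neg, Pi.neg_apply] using ha
    rw [sub_eq_neg_add (const S 1), norm_add_const_of_forall_exists_lt zero_le_one hna, norm_neg,
      add_sub_cancel_left]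

end lp

/-- The space `B(S)` of bounded real functions on a nonempty set `S`, with the sup norm
(realized as `ℓ∞(S)`), has the zero-free property: every metric functional `h`
(a pointwise limit of functionals `x ↦ ‖x − a‖ − ‖a‖`) satisfies `h(u) = 1` for the
constant function `u ≡ −1` or for `u ≡ 1`; in particular `h` does not vanish
identically. -/
theorem stmt_14 (S : Type*) [Nonempty S]
    (h : lp (fun _ : S => ℝ) ∞ → ℝ)
    (hmem : h ∈ closure (Set.range fun a : lp (fun _ : S => ℝ) ∞ =>
      (fun x : lp (fun _ : S => ℝ) ∞ => ‖x - a‖ - ‖a‖))) :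
    ((∀ u : lp (fun _ : S => ℝ) ∞, (∀ s : S, u s = -1) → h u = 1) ∨
      (∀ u : lp (fun _ : S => ℝ) ∞, (∀ s : S, u s = 1) → h u = 1)) ∧
    (∃ x : lp (fun _ : S => ℝ) ∞, h x ≠ 0) := by
  have hclosed : IsClosed ({g | g (lp.const S (-1)) = 1} ∪ {g | g (lp.const S 1) = 1} :
      Set (lp (fun _ : S => ℝ) ∞ → ℝ)) :=
    (isClosed_eq (continuous_apply _) continuous_const).union
      (isClosed_eq (continuous_apply _) continuous_const)
  rcases closure_minimal (by rintro _ ⟨a, rfl⟩; exact lp.norm_const_neg_one_sub_or_norm_const_one_sub a)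
    hclosed hmem with hc | hc
  · exact ⟨Or.inl fun u hu => lp.eq_const_of_forall_apply_eq hu ▸ hc, _, hc.out ▸ one_ne_zero⟩
  · exact ⟨Or.inr fun u hu => lp.eq_const_of_forall_apply_eq hu ▸ hc, _, hc.out ▸ one_ne_zero⟩
end

section
/- Let E be a Banach space with the Opial property and X ⊆ E nonempty and weakly compact. Then X has the unique minimizer property: every metric functional h ∈ X^◇ has a point a ∈ X such that h(a) < h(x) for all x ∈ X with x ≠ a. -/
/-!
A weak cluster point `a` of the net `w` defining `h` is the minimizer. Given `x ≠ a`, a Whitley-type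
diagonal argument (the core of the Eberlein–Šmulian theorem) extracts from the net a sequence `wₙ`
converging weakly to `a` along which `‖x - wₙ‖ - ‖wₙ‖ → h x` and `‖a - wₙ‖ - ‖wₙ‖ → h a`. Thus
`h x - h a = lim (‖wₙ - x‖ - ‖wₙ - a‖)`, and on a subsequence where `‖wₙ - a‖` converges the Opial
property makes this limit positive.
-/

open Filter Topology Set Bornology

section

variable {E : Type*} [NormedAddCommGroup E] [NormedSpace ℝ E]

variable (E) in
def OpialProperty : Prop :=
  ∀ (a : ℕ → E) (l : E),
    (∀ f : E →L[ℝ] ℝ, Tendsto (fun n => f (a n)) atTop (nhds (f l))) →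
    ∀ x : E, x ≠ l →
      liminf (fun n => ‖a n - l‖) atTop < liminf (fun n => ‖a n - x‖) atTop

theorem OpialProperty.pos_of_tendsto_norm_sub_sub_norm_sub (hE : OpialProperty E) {v : ℕ → E}
    {a x : E} (hv : IsBounded (range v))
    (hva : ∀ f : StrongDual ℝ E, Tendsto (fun n => f (v n)) atTop (𝓝 (f a))) (hxa : x ≠ a)
    {c : ℝ} (hc : Tendsto (fun n => ‖v n - x‖ - ‖v n - a‖) atTop (𝓝 c)) : 0 < c := by
  obtain ⟨R, hR⟩ := isBounded_iff_forall_norm_le.1 hv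
  have hbdd : ∀ n, ‖v n - a‖ ∈ Icc 0 (R + ‖a‖) := fun n =>
    ⟨norm_nonneg _, (norm_sub_le _ _).trans (by linarith [hR _ (mem_range_self n)])⟩
  obtain ⟨r, -, φ, hφ, hr⟩ := tendsto_subseq_of_bounded (Metric.isBounded_Icc _ _) hbdd
  have hrc : Tendsto (fun n => ‖v (φ n) - x‖) atTop (𝓝 (c + r)) := by
    simpa using (hc.comp hφ.tendsto_atTop).add hr
  have := hE (v ∘ φ) a (fun f => (hva f).comp hφ.tendsto_atTop) x hxa
  rw [Function.comp_def] at hr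
  simp only [Function.comp_apply, hr.liminf_eq, hrc.liminf_eq] at this
  linarith

theorem isBounded_of_isCompact_toWeakSpace {X : Set E} (hX : IsCompact (toWeakSpace ℝ E '' X)) :
    IsBounded X := by
  have hK := hX.image (NormedSpace.inclusionInDoubleDualWeak ℝ E).continuous
  have hb : IsBounded (NormedSpace.inclusionInDoubleDualWeak ℝ E '' (toWeakSpace ℝ E '' X)) :=
    WeakDual.isBounded_iff_isVonNBounded.2 (hK.isVonNBounded (𝕜 := ℝ))
  obtain ⟨C, hC⟩ := isBounded_iff_forall_norm_le.1 hb
  refine isBounded_iff_forall_norm_le.2 ⟨C, fun x hx => ?_⟩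
  have := hC _ ⟨_, ⟨x, hx, rfl⟩, rfl⟩
  rwa [← (NormedSpace.inclusionInDoubleDualLi ℝ (E := E)).norm_map x]

theorem exists_seq_forall_prefix {α : Type*} (P : List α → α → Prop) (hP : ∀ l, ∃ y, P l y) :
    ∃ v : ℕ → α, ∀ n, P (List.ofFn fun i : Fin n => v i) (v n) := by
  choose f hf using hP
  let hist : ℕ → List α := fun n => Nat.rec [] (fun _ l => l.concat (f l)) n
  have key : ∀ n, hist n = List.ofFn fun i : Fin n => f (hist i) := by
    intro n
    induction n with
    | zero => rfl
    | succ n ih =>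
      show (hist n).concat (f (hist n)) = _
      simp only [List.ofFn_succ', Fin.val_castSucc, Fin.val_last, ← ih]
  exact ⟨fun n => f (hist n), fun n => key n ▸ hf (hist n)⟩

noncomputable def normingFunctional (y : E) : StrongDual ℝ E := (exists_dual_vector'' ℝ y).choose

theorem norm_normingFunctional_le (y : E) : ‖normingFunctional y‖ ≤ 1 :=
  (exists_dual_vector'' ℝ y).choose_spec.1

theorem normingFunctional_apply_self (y : E) : normingFunctional y y = ‖y‖ :=
  (exists_dual_vector'' ℝ y).choose_spec.2

theorem eq_zero_of_mem_closure_of_normingFunctional_eq_zero {D : Set E} {z : E}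
    (hz : z ∈ closure D) (h : ∀ y ∈ D, normingFunctional y z = 0) : z = 0 := by
  refine norm_le_zero_iff.1 (le_of_forall_pos_le_add fun ε hε => ?_)
  obtain ⟨y, hyD, hzy⟩ := Metric.mem_closure_iff.1 hz (ε / 2) (by positivity)
  rw [dist_eq_norm] at hzy
  have hy : ‖y‖ ≤ ‖z - y‖ := calc
    ‖y‖ = normingFunctional y (y - z) := by simp [normingFunctional_apply_self, h y hyD]
    _ ≤ ‖normingFunctional y‖ * ‖y - z‖ := (le_abs_self _).trans ((normingFunctional y).le_opNorm _)
    _ ≤ ‖z - y‖ := by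
      rw [norm_sub_rev]
      exact mul_le_of_le_one_left (norm_nonneg _) (norm_normingFunctional_le y)
  linarith [norm_le_norm_add_norm_sub' z y]

-- Indexed by the countable type `List (ℚ × ℕ)` so that the combinations can be enumerated.
noncomputable def ratCombo (g : ℕ → E) (L : List (ℚ × ℕ)) : E :=
  (L.map fun p => (p.1 : ℝ) • g p.2).sum

theorem ratCombo_congr {g g' : ℕ → E} {L : List (ℚ × ℕ)} (h : ∀ p ∈ L, g p.2 = g' p.2) :
    ratCombo g L = ratCombo g' L := by
  unfold ratCombo
  rw [List.map_congr_left fun p hp => by rw [h p hp]]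

theorem span_range_subset_closure_range_ratCombo (g : ℕ → E) :
    (Submodule.span ℝ (range g) : Set E) ⊆ closure (range (ratCombo g)) := by
  intro y hy
  obtain ⟨n, c, j, rfl⟩ := Submodule.mem_span_set'.1 hy
  choose k hk using fun i => (j i).2
  let T : (Fin n → ℝ) → E := fun c => ∑ i, c i • g (k i)
  have hT : Continuous T := by fun_prop
  have hdense : DenseRange fun q : Fin n → ℚ => fun i => (q i : ℝ) :=
    DenseRange.piMap fun _ => Rat.denseRange_cast
  have hc : T c ∈ closure (T '' range fun q : Fin n → ℚ => fun i => (q i : ℝ)) :=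
    image_closure_subset_closure_image hT ⟨c, hdense.closure_range ▸ mem_univ c, rfl⟩
  convert closure_mono _ hc using 1
  · simp [T, hk]
  · rintro _ ⟨_, ⟨q, rfl⟩, rfl⟩
    exact ⟨List.ofFn fun i => (q i, k i), by simp [ratCombo, T, List.sum_ofFn]⟩

theorem continuous_apply_toWeakSpace_symm (f : StrongDual ℝ E) :
    Continuous fun u : WeakSpace ℝ E => f ((toWeakSpace ℝ E).symm u) :=
  WeakBilin.eval_continuous _ f

theorem MapClusterPt.exists_mem_forall_dist_apply_lt {α : Type*} {F : Filter α} {u : α → E}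
    {a : E} (ha : MapClusterPt (toWeakSpace ℝ E a) F fun i => toWeakSpace ℝ E (u i))
    {S : Set α} (hS : S ∈ F) (f : ℕ → StrongDual ℝ E) (m : ℕ) {ε : ℝ} (hε : 0 < ε) :
    ∃ i ∈ S, ∀ k < m, dist (f k (u i)) (f k a) < ε := by
  have hnhds : ∀ᶠ w in 𝓝 (toWeakSpace ℝ E a),
      ∀ k ∈ Finset.range m, dist (f k ((toWeakSpace ℝ E).symm w)) (f k a) < ε :=
    (Finset.range m).eventually_all.2 fun k _ =>
      (continuous_apply_toWeakSpace_symm (f k)).continuousAt.eventually (Metric.ball_mem_nhds _ hε)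
  obtain ⟨i, hi, hiS⟩ := ((ha.frequently hnhds).and_eventually hS).exists
  exact ⟨i, hiS, fun k hk => hi k (Finset.mem_range.2 hk)⟩

theorem eq_of_mapClusterPt_toWeakSpace {w : ℕ → E} {a b : E} {Y : Submodule ℝ E}
    (hY : IsClosed (Y : Set E)) (haY : a ∈ Y) (hwY : ∀ n, w n ∈ Y) {D : Set E}
    (hD : (Y : Set E) ⊆ closure D)
    (hb : MapClusterPt (toWeakSpace ℝ E b) atTop fun n => toWeakSpace ℝ E (w n))
    (hlim : ∀ y ∈ D,
      Tendsto (fun n => normingFunctional y (w n)) atTop (𝓝 (normingFunctional y a))) :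
    b = a := by
  have hbY : b ∈ Y := by
    have hYw : IsClosed (toWeakSpace ℝ E '' Y) := by
      rw [← hY.closure_eq, Y.convex.toWeakSpace_closure ℝ]
      exact isClosed_closure
    obtain ⟨b', hb'Y, hb'b⟩ :=
      hYw.mem_of_mapClusterPt hb (Eventually.of_forall fun n => mem_image_of_mem _ (hwY n))
    exact (toWeakSpace ℝ E).injective hb'b ▸ hb'Y
  have hba : ∀ y ∈ D, normingFunctional y (b - a) = 0 := fun y hy => by
    have := hb.continuousAt_comp
      (continuous_apply_toWeakSpace_symm (normingFunctional y)).continuousAt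
    rw [map_sub, sub_eq_zero]
    exact eq_of_nhds_neBot (this.clusterPt.mono (hlim y hy))
  exact sub_eq_zero.1
    (eq_zero_of_mem_closure_of_normingFunctional_eq_zero (hD (Y.sub_mem hbY haY)) hba)

theorem exists_seq_tendsto_of_mapClusterPt_toWeakSpace {α : Type*} {F L : Filter α}
    [L.IsCountablyGenerated] (hFL : F ≤ L) {u : α → E} {X : Set E}
    (hX : IsCompact (toWeakSpace ℝ E '' X)) (huX : ∀ i, u i ∈ X) {a : E}
    (ha : MapClusterPt (toWeakSpace ℝ E a) F fun i => toWeakSpace ℝ E (u i)) :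
    ∃ s : ℕ → α, Tendsto s atTop L ∧
      ∀ f : StrongDual ℝ E, Tendsto (fun n => f (u (s n))) atTop (𝓝 (f a)) := by
  obtain ⟨B, hB⟩ := L.exists_antitone_basis
  obtain ⟨enum, henum⟩ := exists_surjective_nat (List (ℚ × ℕ))
  let prefixSeq : List α → ℕ → E := fun l i => (a :: l.map u).getD i 0
  let φ : List α → ℕ → StrongDual ℝ E := fun l k =>
    normingFunctional (ratCombo (prefixSeq l) (enum k))
  -- The `n`-th term is `1/(n+1)`-close to `a` under the norming functionals of the first `n`
  -- rational combinations of `a, u s₀, …, u sₙ₋₁`; this pins every weak cluster point to `a`.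
  obtain ⟨s, hs⟩ := exists_seq_forall_prefix (fun l i => i ∈ B l.length ∧
      ∀ k < l.length, dist (φ l k (u i)) (φ l k a) < 1 / (l.length + 1))
    fun l => ha.exists_mem_forall_dist_apply_lt (hFL (hB.mem l.length)) (φ l) l.length
      Nat.one_div_pos_of_nat
  simp only [List.length_ofFn] at hs
  let G : ℕ → E := fun | 0 => a | n + 1 => u (s n)
  have hprefix : ∀ n, ∀ i ≤ n, prefixSeq (List.ofFn fun j : Fin n => s j) i = G i := by
    rintro n (_ | i) hi
    · rfl
    · simp [prefixSeq, G, show i < n by omega]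
  have hlim : ∀ y ∈ range (ratCombo G),
      Tendsto (fun n => normingFunctional y (u (s n))) atTop (𝓝 (normingFunctional y a)) := by
    rintro _ ⟨L', rfl⟩
    obtain ⟨k, rfl⟩ := henum L'
    have hev : ∀ᶠ n : ℕ in atTop, dist (normingFunctional (ratCombo G (enum k)) (u (s n)))
        (normingFunctional (ratCombo G (enum k)) a) ≤ 1 / (n + 1) := by
      filter_upwards [eventually_gt_atTop k,
        (enum k).toFinset.eventually_all.2 fun p _ => eventually_ge_atTop p.2] with n hkn hpn
      have := (hs n).2 k hkn
      simp only [φ] at this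
      rw [ratCombo_congr fun p hp => hprefix n p.2 (hpn p (List.mem_toFinset.2 hp))] at this
      exact this.le
    exact tendsto_iff_dist_tendsto_zero.2 (squeeze_zero' (Eventually.of_forall fun _ => dist_nonneg)
      hev tendsto_one_div_add_atTop_nhds_zero_nat)
  let Y := (Submodule.span ℝ (range G)).topologicalClosure
  have hGY : ∀ n, G n ∈ Y := fun n =>
    Submodule.le_topologicalClosure _ (Submodule.subset_span (mem_range_self n))
  have hYD : (Y : Set E) ⊆ closure (range (ratCombo G)) := by
    rw [Submodule.topologicalClosure_coe]
    exact closure_minimal (span_range_subset_closure_range_ratCombo G) isClosed_closure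
  have hweak : Tendsto (fun n => toWeakSpace ℝ E (u (s n))) atTop (𝓝 (toWeakSpace ℝ E a)) :=
    hX.tendsto_nhds_of_unique_mapClusterPt
      (Eventually.of_forall fun n => mem_image_of_mem _ (huX _)) fun _ ⟨b, _, hb⟩ hcl => by
        subst hb
        exact congrArg _ (eq_of_mapClusterPt_toWeakSpace (Submodule.isClosed_topologicalClosure _)
          (hGY 0) (fun n => hGY (n + 1)) hYD hcl hlim)
  exact ⟨s, hB.tendsto fun n => (hs n).1, fun f =>
    ((continuous_apply_toWeakSpace_symm f).tendsto _).comp hweak⟩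

end

theorem stmt_15_general {E : Type*} [NormedAddCommGroup E] [NormedSpace ℝ E]
    (opial : ∀ (a : ℕ → E) (l : E),
      (∀ f : E →L[ℝ] ℝ, Tendsto (fun n => f (a n)) atTop (nhds (f l))) →
      ∀ x : E, x ≠ l →
        liminf (fun n => ‖a n - l‖) atTop < liminf (fun n => ‖a n - x‖) atTop)
    (X : Set E) (hXwc : IsCompact (toWeakSpace ℝ E '' X))
    (h : X → ℝ)
    (hmem : h ∈ closure (Set.range fun w : X =>
      (fun x : X => ‖(x : E) - (w : E)‖ - ‖(w : E)‖))) :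
    ∃ a : X, ∀ x : X, x ≠ a → h a < h x := by
  set Ψ : X → X → ℝ := fun w x => ‖(x : E) - (w : E)‖ - ‖(w : E)‖
  have : (comap Ψ (𝓝 h)).NeBot := comap_neBot fun t ht => by
    obtain ⟨_, hwt, w, rfl⟩ := mem_closure_iff_nhds.1 hmem t ht
    exact ⟨w, hwt⟩
  obtain ⟨_, ⟨a, haX, rfl⟩, hclus⟩ := hXwc.exists_clusterPt
    (f := map (fun w : X => toWeakSpace ℝ E w) (comap Ψ (𝓝 h)))
    (le_principal_iff.2 (mem_map.2 (univ_mem' fun w : X => mem_image_of_mem _ w.2)))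
  refine ⟨⟨a, haX⟩, fun x hxa => ?_⟩
  have hΨ : Tendsto (fun w => (Ψ w x, Ψ w ⟨a, haX⟩)) (comap Ψ (𝓝 h))
      (𝓝 (h x, h ⟨a, haX⟩)) :=
    (((continuous_apply x).prodMk (continuous_apply _)).tendsto h).comp tendsto_comap
  obtain ⟨s, hsL, hsa⟩ := exists_seq_tendsto_of_mapClusterPt_toWeakSpace hΨ.le_comap hXwc
    (fun w : X => w.2) hclus
  have hc : Tendsto (fun n => ‖(s n : E) - x‖ - ‖(s n : E) - a‖) atTop
      (𝓝 (h x - h ⟨a, haX⟩)) := by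
    simpa [Ψ, Function.comp_def, norm_sub_rev] using
      (continuous_fst.sub continuous_snd).continuousAt.tendsto.comp (tendsto_comap.comp hsL)
  have := OpialProperty.pos_of_tendsto_norm_sub_sub_norm_sub opial
    ((isBounded_of_isCompact_toWeakSpace hXwc).subset (range_subset_iff.2 fun n => (s n).2))
    hsa (fun hx => hxa (Subtype.ext hx)) hc
  linarith

/-- In a Banach space with the Opial property, every nonempty weakly compact subset `X`
has the unique minimizer property: every metric functional on `X` (a pointwise limit of
functionals `x ↦ ‖x − w‖ − ‖w‖`, `w ∈ X`) has a unique minimizer which is a strict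
minimizer. -/
theorem stmt_15 {E : Type*} [NormedAddCommGroup E] [NormedSpace ℝ E] [CompleteSpace E]
    (opial : ∀ (a : ℕ → E) (l : E),
      (∀ f : E →L[ℝ] ℝ, Tendsto (fun n => f (a n)) atTop (nhds (f l))) →
      ∀ x : E, x ≠ l →
        liminf (fun n => ‖a n - l‖) atTop < liminf (fun n => ‖a n - x‖) atTop)
    (X : Set E) (hX : X.Nonempty) (hXwc : IsCompact (toWeakSpace ℝ E '' X))
    (h : X → ℝ)
    (hmem : h ∈ closure (Set.range fun w : X =>
      (fun x : X => ‖(x : E) - (w : E)‖ - ‖(w : E)‖))) :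
    ∃ a : X, ∀ x : X, x ≠ a → h a < h x :=
  stmt_15_general opial X hXwc h hmem
end

section
/- Let X be a bounded subset of a uniformly convex Banach space E and (a_n) a sequence in X such that the functionals x ↦ ‖x − a_n‖ − ‖a_n‖ converge pointwise on E to h. Then there exists a unique a ∈ E such that h(a) ≤ h(x) for all x ∈ E. -/
open Filter

/-- Uniform convexity: sum-form estimate with variable radius bounded by `R`. -/
lemma ucx_aux {E : Type*} [NormedAddCommGroup E] [NormedSpace ℝ E]
    [UniformConvexSpace E] {d R : ℝ} (hd : 0 < d) (hR : 0 < R) :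
    ∃ δ > 0, ∀ u v : E, ‖u‖ ≤ R → ‖v‖ ≤ R → d ≤ ‖u - v‖ →
      ‖u + v‖ ≤ 2 * max ‖u‖ ‖v‖ - δ := by
  obtain ⟨δ₀, hδ₀, H⟩ :=
    exists_forall_closed_ball_dist_add_le_two_sub E (div_pos hd hR)
  refine ⟨δ₀ * (d / 2), by positivity, fun u v hu hv huv => ?_⟩
  set r := max ‖u‖ ‖v‖ with hr
  have hrR : r ≤ R := max_le hu hv
  have h2r : d ≤ 2 * r := by
    have := norm_sub_le u v
    have h1 : ‖u‖ ≤ r := le_max_left _ _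
    have h2 : ‖v‖ ≤ r := le_max_right _ _
    linarith
  have hrpos : 0 < r := by linarith
  have hu1 : ‖r⁻¹ • u‖ ≤ 1 := by
    rw [norm_smul, Real.norm_eq_abs, abs_of_pos (inv_pos.2 hrpos)]
    rw [inv_mul_le_one₀ hrpos]
    exact le_max_left _ _
  have hv1 : ‖r⁻¹ • v‖ ≤ 1 := by
    rw [norm_smul, Real.norm_eq_abs, abs_of_pos (inv_pos.2 hrpos)]
    rw [inv_mul_le_one₀ hrpos]
    exact le_max_right _ _
  have hdist : d / R ≤ ‖r⁻¹ • u - r⁻¹ • v‖ := by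
    rw [← smul_sub, norm_smul, Real.norm_eq_abs, abs_of_pos (inv_pos.2 hrpos)]
    calc d / R ≤ d / r := by
          apply div_le_div_of_nonneg_left hd.le hrpos hrR
      _ ≤ ‖u - v‖ / r := by gcongr
      _ = r⁻¹ * ‖u - v‖ := by rw [div_eq_inv_mul]
  have := H hu1 hv1 hdist
  rw [← smul_add, norm_smul, Real.norm_eq_abs, abs_of_pos (inv_pos.2 hrpos)] at this
  have h3 : ‖u + v‖ ≤ (2 - δ₀) * r := by
    have h4 := mul_le_mul_of_nonneg_left this hrpos.le
    rwa [← mul_assoc, mul_inv_cancel₀ hrpos.ne', one_mul, mul_comm] at h4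
  calc ‖u + v‖ ≤ (2 - δ₀) * r := h3
    _ = 2 * r - δ₀ * r := by ring
    _ ≤ 2 * r - δ₀ * (d / 2) := by nlinarith

/-- If `X` is a bounded subset of a uniformly convex Banach space, `(a_n)` is a sequence
in `X`, and the functionals `x ↦ ‖x − a_n‖ − ‖a_n‖` converge pointwise on `E` to `h`,
then `h` has a unique minimizer over `E`. -/
theorem stmt_17 {E : Type*} [NormedAddCommGroup E] [NormedSpace ℝ E]
    [UniformConvexSpace E] [CompleteSpace E]
    (X : Set E) (hX : Bornology.IsBounded X)
    (a : ℕ → E) (ha : ∀ n, a n ∈ X)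
    (h : E → ℝ)
    (hconv : ∀ x : E, Tendsto (fun n => ‖x - a n‖ - ‖a n‖) atTop (nhds (h x))) :
    ∃! z : E, ∀ x : E, h z ≤ h x := by
  obtain ⟨M₀, hM₀⟩ := hX.exists_norm_le
  set M := max M₀ 0 with hMdef
  have hM : ∀ n, ‖a n‖ ≤ M := fun n => (hM₀ _ (ha n)).trans (le_max_left _ _)
  have hMnn : (0:ℝ) ≤ M := le_max_right _ _
  -- h 0 = 0
  have h0 : h 0 = 0 := by
    have : Tendsto (fun n => ‖(0:E) - a n‖ - ‖a n‖) atTop (nhds 0) := by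
      simpa using tendsto_const_nhds (x := (0:ℝ)) (f := atTop (α := ℕ))
    exact tendsto_nhds_unique (hconv 0) this
  -- Lipschitz-type bound
  have hLip : ∀ x y : E, h x ≤ h y + ‖x - y‖ := by
    intro x y
    refine le_of_tendsto_of_tendsto' (hconv x) ((hconv y).add_const ‖x - y‖) fun n => ?_
    have : ‖x - a n‖ ≤ ‖y - a n‖ + ‖x - y‖ := by
      have hxe : x - a n = (x - y) + (y - a n) := by abel
      calc ‖x - a n‖ = ‖(x - y) + (y - a n)‖ := by rw [hxe]
        _ ≤ ‖x - y‖ + ‖y - a n‖ := norm_add_le _ _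
        _ = ‖y - a n‖ + ‖x - y‖ := by ring
    linarith
  -- lower bound / coercivity
  have hlb : ∀ x : E, ‖x‖ - 2 * M ≤ h x := by
    intro x
    refine ge_of_tendsto' (hconv x) fun n => ?_
    have h1 : ‖x‖ ≤ ‖x - a n‖ + ‖a n‖ := by
      have hxe : x = (x - a n) + a n := by abel
      calc ‖x‖ = ‖(x - a n) + a n‖ := by rw [← hxe]
        _ ≤ ‖x - a n‖ + ‖a n‖ := norm_add_le _ _
    have := hM n
    linarith
  have bdd : BddBelow (Set.range h) := by
    refine ⟨-(2 * M), ?_⟩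
    rintro _ ⟨x, rfl⟩
    have := hlb x
    have := norm_nonneg x
    linarith
  set m := sInf (Set.range h) with hmdef
  have hm_le : ∀ x, m ≤ h x := fun x => csInf_le bdd ⟨x, rfl⟩
  have hm0 : m ≤ 0 := h0 ▸ hm_le 0
  -- norm bound via h
  have hnorm : ∀ x : E, h x ≤ 1 → ‖x‖ ≤ 2 * M + 1 := by
    intro x hx
    have := hlb x
    linarith
  -- key convexity estimate for h
  have key : ∀ d : ℝ, 0 < d → ∃ δ > 0, ∀ x y : E,
      ‖x‖ ≤ 2 * M + 1 → ‖y‖ ≤ 2 * M + 1 → d ≤ ‖x - y‖ →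
      h ((2:ℝ)⁻¹ • (x + y)) ≤ max (h x) (h y) - δ := by
    intro d hd
    obtain ⟨δ, hδ, H⟩ := ucx_aux (E := E) hd
      (show (0:ℝ) < 3 * M + 1 by linarith)
    refine ⟨δ / 2, by positivity, fun x y hx hy hxy => ?_⟩
    refine le_of_tendsto_of_tendsto' (hconv _)
      ((((hconv x).max (hconv y)).sub_const (δ / 2))) fun n => ?_
    have hun : ‖x - a n‖ ≤ 3 * M + 1 := by
      have h1 := norm_sub_le x (a n); have := hM n; linarith
    have hvn : ‖y - a n‖ ≤ 3 * M + 1 := by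
      have h1 := norm_sub_le y (a n); have := hM n; linarith
    have hsub : d ≤ ‖(x - a n) - (y - a n)‖ := by
      simpa using hxy
    have hH := H (x - a n) (y - a n) hun hvn hsub
    have hmid : (x - a n) + (y - a n) = (2:ℝ) • ((2:ℝ)⁻¹ • (x + y) - a n) := by
      module
    rw [hmid, norm_smul, Real.norm_ofNat] at hH
    have hmax : max ‖x - a n‖ ‖y - a n‖ - ‖a n‖ =
        max (‖x - a n‖ - ‖a n‖) (‖y - a n‖ - ‖a n‖) := by
      rcases max_cases ‖x - a n‖ ‖y - a n‖ with ⟨h1, h2⟩ | ⟨h1, h2⟩ <;>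
        rcases max_cases (‖x - a n‖ - ‖a n‖) (‖y - a n‖ - ‖a n‖) with ⟨h3, h4⟩ | ⟨h3, h4⟩ <;>
        simp_all <;> linarith
    simp only [← hmax]
    linarith
  -- minimizing sequence
  have hex : ∀ k : ℕ, ∃ y : E, h y < m + 1 / (k + 1) := by
    intro k
    have hlt : m < m + 1 / (k + 1 : ℝ) := by
      have : (0:ℝ) < 1 / (k + 1 : ℝ) := by positivity
      linarith
    obtain ⟨_, ⟨y, rfl⟩, hy⟩ := exists_lt_of_csInf_lt (Set.range_nonempty h) hlt
    exact ⟨y, hy⟩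
  choose u hu using hex
  have hu_norm : ∀ k, ‖u k‖ ≤ 2 * M + 1 := by
    intro k
    refine hnorm _ ?_
    have h1 : (1 : ℝ) / (k + 1) ≤ 1 := by
      rw [div_le_one (by positivity)]
      have : (0:ℝ) ≤ (k:ℝ) := Nat.cast_nonneg _
      linarith
    have := hu k; linarith
  have hu_dec : ∀ N k, N ≤ k → h (u k) < m + 1 / (N + 1 : ℝ) := by
    intro N k hNk
    refine (hu k).trans_le ?_
    have : (1:ℝ) / (k + 1) ≤ 1 / (N + 1) := by
      apply div_le_div_of_nonneg_left one_pos.le (by positivity)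
      exact_mod_cast Nat.succ_le_succ hNk
    linarith
  -- Cauchy
  have hcauchy : CauchySeq u := by
    rw [Metric.cauchySeq_iff]
    intro ε hε
    obtain ⟨δ, hδ, H⟩ := key ε hε
    obtain ⟨N, hN⟩ := exists_nat_one_div_lt hδ
    refine ⟨N, fun j hj k hk => ?_⟩
    by_contra hc
    push_neg at hc
    rw [dist_eq_norm] at hc
    have hH := H (u j) (u k) (hu_norm j) (hu_norm k) hc
    have h1 := hu_dec N j hj
    have h2 := hu_dec N k hk
    have h3 : max (h (u j)) (h (u k)) < m + 1 / (N + 1 : ℝ) := max_lt h1 h2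
    have h4 := hm_le ((2:ℝ)⁻¹ • (u j + u k))
    linarith
  obtain ⟨z, hz⟩ := cauchySeq_tendsto_of_complete hcauchy
  have hzm : h z ≤ m := by
    by_contra hc
    push_neg at hc
    set ε := (h z - m) / 2 with hε
    have hεpos : 0 < ε := by simp only [hε]; linarith
    obtain ⟨N₁, hN₁⟩ := exists_nat_one_div_lt hεpos
    have hev := (Metric.tendsto_atTop.1 hz) ε hεpos
    obtain ⟨N₂, hN₂⟩ := hev
    set k := max N₁ N₂
    have h1 := hLip z (u k)
    have h2 := hu_dec N₁ k (le_max_left _ _)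
    have h3 := hN₂ k (le_max_right _ _)
    rw [dist_eq_norm] at h3
    have h4 : ‖z - u k‖ < ε := by rwa [norm_sub_rev] at h3
    have h5 : (1:ℝ) / (k + 1) ≤ 1 / (N₁ + 1) := by
      apply div_le_div_of_nonneg_left one_pos.le (by positivity)
      exact_mod_cast Nat.succ_le_succ (le_max_left _ _)
    simp only [hε] at *
    linarith
  refine ⟨z, fun x => hzm.trans (hm_le x), fun y hy => ?_⟩
  by_contra hne
  have hd : 0 < ‖y - z‖ := by
    rw [norm_pos_iff, sub_ne_zero]; exact hne
  obtain ⟨δ, hδ, H⟩ := key ‖y - z‖ hd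
  have hyz : h y = h z := le_antisymm (hy z) ((hzm.trans (hm_le y)))
  have hny : ‖y‖ ≤ 2 * M + 1 := hnorm y (by rw [hyz]; linarith)
  have hnz : ‖z‖ ≤ 2 * M + 1 := hnorm z (by linarith)
  have hH := H y z hny hnz le_rfl
  have := hy ((2:ℝ)⁻¹ • (y + z))
  rw [hyz] at hH
  simp only [max_self] at hH
  linarith [hyz ▸ this]
end

section
/- Let E be a Banach space, T, U : E → E commuting affine nonexpansive mappings, and X ⊆ E a nonempty convex set with TX ⊆ X, UX ⊆ X, and inf_{x∈X}‖x − Tx‖ = inf_{x∈X}‖x − Ux‖ = 0. Suppose moreover m(T,X)=0 implies ‖w − Tⁿw‖/n → 0 for w ∈ X (Kohlberg–Neyman). Given w ∈ X, set a_n = (1/n)Σ_{k=0}^{n−1} T^k w and b_n = (1/n)Σ_{k=0}^{n−1} U^k a_n. Then ‖b_n − T b_n‖ ≤ ‖w − Tⁿw‖/n and ‖b_n − U b_n‖ ≤ ‖w − Uⁿw‖/n for all n ≥ 1. -/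
/-!
An affine map commuting with `f` commutes with the Cesàro means of `f`-orbits, and the Cesàro
means of the orbits of two points under a nonexpansive map are no farther apart than the points.
Since `T` maps the mean `a_n` of the `T`-orbit of `w` to the mean of the shifted orbit, the sum
telescopes to `a_n - T a_n = (w - Tⁿ w) / n`, and likewise `b_n - U b_n = (a_n - Uⁿ a_n) / n`.
Commuting `T` through the `U`-mean gives `‖b_n - T b_n‖ ≤ ‖a_n - T a_n‖`, and commuting `Uⁿ`
through the `T`-mean gives `‖a_n - Uⁿ a_n‖ ≤ ‖w - Uⁿ w‖`.
-/

open Filter Finset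

section Affine
variable {E : Type*} [AddCommGroup E] [Module ℝ E]

theorem map_centerMass_of_affine {ι : Type*} {f : E → E}
    (hf : ∀ (x y : E) (t : ℝ), f (t • x + (1 - t) • y) = t • f x + (1 - t) • f y)
    {s : Finset ι} (hs : s.Nonempty) {w : ι → ℝ} (hw : ∀ i ∈ s, 0 < w i) (z : ι → E) :
    f (s.centerMass w z) = s.centerMass w (f ∘ z) := by
  classical
  induction hs using Finset.Nonempty.cons_induction with
  | singleton i =>
    simp [centerMass_singleton _ _ (hw i (mem_singleton_self i)).ne']
  | cons i s hi hs ih =>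
    simp only [mem_cons, forall_eq_or_imp] at hw
    have hsum : 0 < ∑ j ∈ s, w j := sum_pos hw.2 hs
    have hcoef : (∑ j ∈ s, w j) / (w i + ∑ j ∈ s, w j) = 1 - w i / (w i + ∑ j ∈ s, w j) := by
      rw [eq_sub_iff_add_eq, ← add_div, add_comm, div_self (by linarith [hw.1])]
    rw [cons_eq_insert, centerMass_insert _ _ _ hi hsum.ne', centerMass_insert _ _ _ hi hsum.ne',
      hcoef, hf, ih hw.2, Function.comp_apply]

theorem iterate_of_affine {f : E → E}
    (hf : ∀ (x y : E) (t : ℝ), f (t • x + (1 - t) • y) = t • f x + (1 - t) • f y) (n : ℕ)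
    (x y : E) (t : ℝ) : f^[n] (t • x + (1 - t) • y) = t • f^[n] x + (1 - t) • f^[n] y := by
  induction n with
  | zero => rfl
  | succ n ih => simp only [Function.iterate_succ_apply', ih, hf]

noncomputable def cesaroAvg (f : E → E) (n : ℕ) (v : E) : E :=
  (range n).centerMass (fun _ => (1 : ℝ)) (fun k => f^[k] v)

theorem cesaroAvg_eq_smul_sum (f : E → E) (n : ℕ) (v : E) :
    cesaroAvg f n v = (n : ℝ)⁻¹ • ∑ k ∈ range n, f^[k] v := by
  simp [cesaroAvg, centerMass]

theorem map_cesaroAvg {f g : E → E}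
    (hg : ∀ (x y : E) (t : ℝ), g (t • x + (1 - t) • y) = t • g x + (1 - t) • g y)
    (hfg : Function.Commute f g) {n : ℕ} (hn : n ≠ 0) (v : E) :
    g (cesaroAvg f n v) = cesaroAvg f n (g v) := by
  rw [cesaroAvg, map_centerMass_of_affine hg (nonempty_range_iff.mpr hn) (fun _ _ => one_pos)]
  congr 1
  funext k
  exact ((hfg.iterate_left k).eq v).symm

theorem cesaroAvg_sub_map {f : E → E}
    (hf : ∀ (x y : E) (t : ℝ), f (t • x + (1 - t) • y) = t • f x + (1 - t) • f y)
    {n : ℕ} (hn : n ≠ 0) (v : E) :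
    cesaroAvg f n v - f (cesaroAvg f n v) = (n : ℝ)⁻¹ • (v - f^[n] v) := by
  rw [map_cesaroAvg hf (Function.Commute.refl f) hn, cesaroAvg_eq_smul_sum,
    cesaroAvg_eq_smul_sum, ← smul_sub, ← sum_sub_distrib]
  simp only [← Function.iterate_succ_apply]
  rw [sum_range_sub' (fun k => f^[k] v)]
  rfl

end Affine

section Nonexpansive
variable {E : Type*} [SeminormedAddCommGroup E] [NormedSpace ℝ E]

theorem norm_cesaroAvg_sub_map {f : E → E}
    (hf : ∀ (x y : E) (t : ℝ), f (t • x + (1 - t) • y) = t • f x + (1 - t) • f y)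
    {n : ℕ} (hn : n ≠ 0) (v : E) :
    ‖cesaroAvg f n v - f (cesaroAvg f n v)‖ = ‖v - f^[n] v‖ / n := by
  rw [cesaroAvg_sub_map hf hn, norm_smul, norm_inv, Real.norm_natCast, inv_mul_eq_div]

theorem norm_cesaroAvg_sub_cesaroAvg_le {f : E → E} (hf : LipschitzWith 1 f) (n : ℕ) (v v' : E) :
    ‖cesaroAvg f n v - cesaroAvg f n v'‖ ≤ ‖v - v'‖ := by
  rcases Nat.eq_zero_or_pos n with rfl | hn
  · simp [cesaroAvg_eq_smul_sum]
  have hterm : ∀ k ∈ range n, ‖f^[k] v - f^[k] v'‖ ≤ ‖v - v'‖ := fun k _ => by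
    simpa [dist_eq_norm] using (hf.iterate k).dist_le_mul v v'
  rw [cesaroAvg_eq_smul_sum, cesaroAvg_eq_smul_sum, ← smul_sub, ← sum_sub_distrib, norm_smul,
    norm_inv, Real.norm_natCast, inv_mul_le_iff₀ (by exact_mod_cast hn)]
  calc ‖∑ k ∈ range n, (f^[k] v - f^[k] v')‖ ≤ ∑ k ∈ range n, ‖f^[k] v - f^[k] v'‖ :=
        norm_sum_le _ _
    _ ≤ n * ‖v - v'‖ := by simpa using sum_le_card_nsmul _ _ _ hterm

end Nonexpansive

theorem stmt_18_general {E : Type*} [NormedAddCommGroup E] [NormedSpace ℝ E]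
    (T U : E → E)
    (hTaff : ∀ (x y : E) (t : ℝ), T (t • x + (1 - t) • y) = t • T x + (1 - t) • T y)
    (hUaff : ∀ (x y : E) (t : ℝ), U (t • x + (1 - t) • y) = t • U x + (1 - t) • U y)
    (hTne : ∀ x y : E, ‖T x - T y‖ ≤ ‖x - y‖)
    (hUne : ∀ x y : E, ‖U x - U y‖ ≤ ‖x - y‖)
    (hcomm : ∀ x : E, T (U x) = U (T x))
    (w : E)
    (a b : ℕ → E)
    (ha : ∀ n : ℕ, a n = (n : ℝ)⁻¹ • ∑ k ∈ Finset.range n, T^[k] w)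
    (hb : ∀ n : ℕ, b n = (n : ℝ)⁻¹ • ∑ k ∈ Finset.range n, U^[k] (a n)) :
    ∀ n : ℕ, 1 ≤ n →
      ‖b n - T (b n)‖ ≤ ‖w - T^[n] w‖ / n ∧
      ‖b n - U (b n)‖ ≤ ‖w - U^[n] w‖ / n := by
  intro n hn
  have hn0 : n ≠ 0 := Nat.one_le_iff_ne_zero.mp hn
  have hTlip : LipschitzWith 1 T := .mk_one fun x y => by simpa only [dist_eq_norm] using hTne x y
  have hUlip : LipschitzWith 1 U := .mk_one fun x y => by simpa only [dist_eq_norm] using hUne x y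
  have ha' : a n = cesaroAvg T n w := by rw [ha, cesaroAvg_eq_smul_sum]
  have hb' : b n = cesaroAvg U n (a n) := by rw [hb, cesaroAvg_eq_smul_sum]
  have hUT : Function.Commute U T := Function.Commute.symm hcomm
  constructor
  · calc ‖b n - T (b n)‖ = ‖cesaroAvg U n (a n) - cesaroAvg U n (T (a n))‖ := by
          rw [hb', map_cesaroAvg hTaff hUT hn0]
      _ ≤ ‖a n - T (a n)‖ := norm_cesaroAvg_sub_cesaroAvg_le hUlip n _ _
      _ = ‖w - T^[n] w‖ / n := by rw [ha', norm_cesaroAvg_sub_map hTaff hn0]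
  · have hUa : ‖a n - U^[n] (a n)‖ ≤ ‖w - U^[n] w‖ := by
      rw [ha', map_cesaroAvg (iterate_of_affine hUaff n) (hUT.iterate_left n).symm hn0]
      exact norm_cesaroAvg_sub_cesaroAvg_le hTlip n _ _
    calc ‖b n - U (b n)‖ = ‖a n - U^[n] (a n)‖ / n := by
          rw [hb', norm_cesaroAvg_sub_map hUaff hn0]
      _ ≤ ‖w - U^[n] w‖ / n := by gcongr

/-- Cesàro-average estimates for two commuting affine nonexpansive maps: with
`a_n = (1/n) Σ_{k<n} T^k w` and `b_n = (1/n) Σ_{k<n} U^k a_n` one has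
`‖b_n − T b_n‖ ≤ ‖w − Tⁿw‖/n` and `‖b_n − U b_n‖ ≤ ‖w − Uⁿw‖/n` for all `n ≥ 1`. -/
theorem stmt_18 {E : Type*} [NormedAddCommGroup E] [NormedSpace ℝ E] [CompleteSpace E]
    (T U : E → E)
    (hTaff : ∀ (x y : E) (t : ℝ), T (t • x + (1 - t) • y) = t • T x + (1 - t) • T y)
    (hUaff : ∀ (x y : E) (t : ℝ), U (t • x + (1 - t) • y) = t • U x + (1 - t) • U y)
    (hTne : ∀ x y : E, ‖T x - T y‖ ≤ ‖x - y‖)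
    (hUne : ∀ x y : E, ‖U x - U y‖ ≤ ‖x - y‖)
    (hcomm : ∀ x : E, T (U x) = U (T x))
    (X : Set E) (hXne : X.Nonempty) (hXconv : Convex ℝ X)
    (hTX : Set.MapsTo T X X) (hUX : Set.MapsTo U X X)
    (hmT : sInf ((fun x => ‖x - T x‖) '' X) = 0)
    (hmU : sInf ((fun x => ‖x - U x‖) '' X) = 0)
    (hKN : ∀ v ∈ X, Tendsto (fun n : ℕ => ‖v - T^[n] v‖ / n) atTop (nhds 0)
        ∧ Tendsto (fun n : ℕ => ‖v - U^[n] v‖ / n) atTop (nhds 0))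
    (w : E) (hw : w ∈ X)
    (a b : ℕ → E)
    (ha : ∀ n : ℕ, a n = (n : ℝ)⁻¹ • ∑ k ∈ Finset.range n, T^[k] w)
    (hb : ∀ n : ℕ, b n = (n : ℝ)⁻¹ • ∑ k ∈ Finset.range n, U^[k] (a n)) :
    ∀ n : ℕ, 1 ≤ n →
      ‖b n - T (b n)‖ ≤ ‖w - T^[n] w‖ / n ∧
      ‖b n - U (b n)‖ ≤ ‖w - U^[n] w‖ / n :=
  stmt_18_general T U hTaff hUaff hTne hUne hcomm w a b ha hb
end
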